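/- Let X = {x₁,...,x_m} be a unit-norm tight frame for R^n with coherence μ. Define 2m unit vectors in R^{2n} by xᵢ⁺ = (1/√2)(xᵢ, xᵢ) and xᵢ⁻ = (1/√2)(xᵢ, -xᵢ). Then {xᵢ⁺} ∪ {xᵢ⁻} is a unit-norm tight frame for R^{2n} with coherence at most μ. Consequently μ_{2m,2n} ≤ μ_{m,n}. -/

import Mathlib

open scoped RealInnerProductSpace
abbrev E (n : ℕ) := EuclideanSpace ℝ (Fin n)
noncomputable def cohF {n m : ℕ} (x : Fin m → E n) : ℝ :=
  sSup {r : ℝ | ∃ i j : Fin m, i ≠ j ∧ r = |⟪x i, x j⟫|}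
noncomputable def muConst (m n : ℕ) : ℝ :=
  sInf {r : ℝ | ∃ x : Fin m → E n, (∀ i, ‖x i‖ = 1) ∧
    (∀ v : E n, ∑ i, ⟪x i, v⟫ • x i = ((m : ℝ) / n) • v) ∧ cohF x = r}

/-!
For `v = (a, b)` one has `⟪xᵢ⁺, v⟫ xᵢ⁺ + ⟪xᵢ⁻, v⟫ xᵢ⁻ = (⟪xᵢ, a⟫ xᵢ, ⟪xᵢ, b⟫ xᵢ)`, so the frame
operator of the doubled system is the frame operator of `X` acting on each factor, and tightness
with bound `m / n` is inherited. Vectors of the same sign have the inner products of `X`, vectors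
of opposite signs are orthogonal, so the coherence does not grow. Transporting the doubled frame
to `ℝ²ⁿ` along an isometry shows `μ_{2m,2n} ≤ coh X` for every unit-norm tight frame `X`.
-/

section Frames

variable {ι κ F G : Type*} [NormedAddCommGroup F] [InnerProductSpace ℝ F]
  [NormedAddCommGroup G] [InnerProductSpace ℝ G]

def IsTightFrame [Fintype ι] (x : ι → F) (c : ℝ) : Prop :=
  ∀ v, ∑ i, ⟪x i, v⟫ • x i = c • v

theorem IsTightFrame.comp_equiv_map [Fintype ι] [Fintype κ] {x : ι → F} {c : ℝ}
    (hx : IsTightFrame x c) (L : F ≃ₗᵢ[ℝ] G) (e : κ ≃ ι) :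
    IsTightFrame (fun k => L (x (e k))) c := by
  intro w
  calc ∑ k, ⟪L (x (e k)), w⟫ • L (x (e k))
      = L (∑ k, ⟪x (e k), L.symm w⟫ • x (e k)) := by
        simp only [map_sum, map_smul, ← L.inner_map_map, L.apply_symm_apply]
    _ = L (c • L.symm w) := by rw [e.sum_comp (fun i => ⟪x i, L.symm w⟫ • x i), hx]
    _ = c • w := by rw [map_smul, L.apply_symm_apply]

noncomputable def doubleFrame (x : ι → F) : ι ⊕ ι → WithLp 2 (F × F) :=
  Sum.elim (fun i => (√2)⁻¹ • WithLp.toLp 2 (x i, x i))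
    (fun i => (√2)⁻¹ • WithLp.toLp 2 (x i, -x i))

theorem inv_sqrt_two_mul_self : (√2)⁻¹ * (√2)⁻¹ = (2 : ℝ)⁻¹ := by
  rw [← mul_inv, Real.mul_self_sqrt zero_le_two]

theorem inner_inv_sqrt_two_smul_toLp (a b c d : F) :
    ⟪(√2)⁻¹ • WithLp.toLp 2 (a, b), (√2)⁻¹ • WithLp.toLp 2 (c, d)⟫ = (⟪a, c⟫ + ⟪b, d⟫) / 2 := by
  rw [real_inner_smul_left, real_inner_smul_right, ← mul_assoc, inv_sqrt_two_mul_self,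
    inv_mul_eq_div]
  rfl

theorem norm_doubleFrame (x : ι → F) (j : ι ⊕ ι) : ‖doubleFrame x j‖ = ‖x (j.elim id id)‖ := by
  rw [norm_eq_sqrt_real_inner, norm_eq_sqrt_real_inner]
  rcases j with i | i <;>
    simp only [doubleFrame, Sum.elim_inl, Sum.elim_inr, id, inner_inv_sqrt_two_smul_toLp,
      inner_neg_neg, add_self_div_two]

theorem inner_doubleFrame_inl_inr (x : ι → F) (i j : ι) :
    ⟪doubleFrame x (.inl i), doubleFrame x (.inr j)⟫ = 0 := by
  simp only [doubleFrame, Sum.elim_inl, Sum.elim_inr, inner_inv_sqrt_two_smul_toLp,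
    inner_neg_right, add_neg_cancel, zero_div]

theorem inner_doubleFrame_inr_inl (x : ι → F) (i j : ι) :
    ⟪doubleFrame x (.inr i), doubleFrame x (.inl j)⟫ = 0 := by
  rw [real_inner_comm, inner_doubleFrame_inl_inr]

theorem inner_doubleFrame_inl_inl (x : ι → F) (i j : ι) :
    ⟪doubleFrame x (.inl i), doubleFrame x (.inl j)⟫ = ⟪x i, x j⟫ := by
  simp only [doubleFrame, Sum.elim_inl, inner_inv_sqrt_two_smul_toLp, add_self_div_two]

theorem inner_doubleFrame_inr_inr (x : ι → F) (i j : ι) :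
    ⟪doubleFrame x (.inr i), doubleFrame x (.inr j)⟫ = ⟪x i, x j⟫ := by
  simp only [doubleFrame, Sum.elim_inr, inner_inv_sqrt_two_smul_toLp, inner_neg_neg,
    add_self_div_two]

theorem inner_smul_doubleFrame_inl_add_inr (x : ι → F) (i : ι) (a b : F) :
    ⟪doubleFrame x (.inl i), WithLp.toLp 2 (a, b)⟫ • doubleFrame x (.inl i) +
      ⟪doubleFrame x (.inr i), WithLp.toLp 2 (a, b)⟫ • doubleFrame x (.inr i) =
      WithLp.toLp 2 (⟪x i, a⟫ • x i, ⟪x i, b⟫ • x i) := by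
  simp only [doubleFrame, Sum.elim_inl, Sum.elim_inr, real_inner_smul_left,
    WithLp.prod_inner_apply, inner_neg_left, smul_smul, ← WithLp.toLp_smul,
    ← WithLp.toLp_add, Prod.smul_mk, Prod.mk_add_mk, smul_neg]
  congr 2
  · rw [← add_smul]; congr 1; linear_combination (2 * ⟪x i, a⟫) * inv_sqrt_two_mul_self
  · rw [← sub_eq_add_neg, ← sub_smul]; congr 1
    linear_combination (2 * ⟪x i, b⟫) * inv_sqrt_two_mul_self

theorem sum_inner_smul_doubleFrame [Fintype ι] (x : ι → F) (a b : F) :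
    ∑ j, ⟪doubleFrame x j, WithLp.toLp 2 (a, b)⟫ • doubleFrame x j =
      WithLp.toLp 2 (∑ i, ⟪x i, a⟫ • x i, ∑ i, ⟪x i, b⟫ • x i) := by
  rw [Fintype.sum_sum_type, ← Finset.sum_add_distrib, prod_mk_sum, WithLp.toLp_sum]
  exact Finset.sum_congr rfl fun i _ => inner_smul_doubleFrame_inl_add_inr x i a b

theorem IsTightFrame.doubleFrame [Fintype ι] {x : ι → F} {c : ℝ} (hx : IsTightFrame x c) :
    IsTightFrame (doubleFrame x) c := by
  intro v
  obtain ⟨⟨a, b⟩, rfl⟩ := WithLp.toLp_surjective 2 v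
  rw [sum_inner_smul_doubleFrame, hx, hx, ← WithLp.toLp_smul, Prod.smul_mk]

theorem abs_inner_doubleFrame_le {x : ι → F} {μ : ℝ} (hμ : 0 ≤ μ)
    (hx : ∀ i j, i ≠ j → |⟪x i, x j⟫| ≤ μ) (j k : ι ⊕ ι) (hjk : j ≠ k) :
    |⟪doubleFrame x j, doubleFrame x k⟫| ≤ μ := by
  rcases j with i | i <;> rcases k with i' | i'
  · rw [inner_doubleFrame_inl_inl]; exact hx i i' fun h => hjk (h ▸ rfl)
  · rwa [inner_doubleFrame_inl_inr, abs_zero]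
  · rwa [inner_doubleFrame_inr_inl, abs_zero]
  · rw [inner_doubleFrame_inr_inr]; exact hx i i' fun h => hjk (h ▸ rfl)

end Frames

section Coherence

variable {n m : ℕ}

theorem cohF_nonneg (x : Fin m → E n) : 0 ≤ cohF x :=
  Real.sSup_nonneg (by rintro _ ⟨i, j, -, rfl⟩; exact abs_nonneg _)

theorem abs_inner_le_cohF (x : Fin m → E n) {i j : Fin m} (hij : i ≠ j) :
    |⟪x i, x j⟫| ≤ cohF x :=
  le_csSup ((Set.finite_range fun p : Fin m × Fin m => |⟪x p.1, x p.2⟫|).subset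
    (by rintro _ ⟨i, j, -, rfl⟩; exact ⟨(i, j), rfl⟩)).bddAbove ⟨i, j, hij, rfl⟩

theorem cohF_le {x : Fin m → E n} {μ : ℝ} (hμ : 0 ≤ μ) (hx : ∀ i j, i ≠ j → |⟪x i, x j⟫| ≤ μ) :
    cohF x ≤ μ :=
  Real.sSup_le (by rintro _ ⟨i, j, hij, rfl⟩; exact hx i j hij) hμ

theorem muConst_le_cohF {x : Fin m → E n} (hunit : ∀ i, ‖x i‖ = 1)
    (htight : IsTightFrame x ((m : ℝ) / n)) : muConst m n ≤ cohF x :=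
  csInf_le ⟨0, by rintro _ ⟨y, -, -, rfl⟩; exact cohF_nonneg y⟩ ⟨x, hunit, htight, rfl⟩

theorem le_muConst {μ : ℝ}
    (hne : ∃ x : Fin m → E n, (∀ i, ‖x i‖ = 1) ∧ IsTightFrame x ((m : ℝ) / n))
    (h : ∀ x : Fin m → E n, (∀ i, ‖x i‖ = 1) → IsTightFrame x ((m : ℝ) / n) → μ ≤ cohF x) :
    μ ≤ muConst m n := by
  obtain ⟨x, hunit, htight⟩ := hne
  exact le_csInf ⟨_, x, hunit, htight, rfl⟩ fun _ ⟨y, hy, hty, hr⟩ => hr ▸ h y hy hty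

end Coherence

noncomputable def euclideanDoubleIso (n : ℕ) : WithLp 2 (E n × E n) ≃ₗᵢ[ℝ] E (2 * n) :=
  (PiLp.sumPiLpEquivProdLpPiLp 2 (fun _ : Fin n ⊕ Fin n => ℝ)).symm.trans
    (LinearIsometryEquiv.piLpCongrLeft 2 ℝ ℝ (finSumFinEquiv.trans (finCongr (two_mul n).symm)))

def finTwoMulEquivSum (m : ℕ) : Fin (2 * m) ≃ Fin m ⊕ Fin m :=
  (finCongr (two_mul m)).trans finSumFinEquiv.symm

noncomputable def doubleFrameFin {n m : ℕ} (x : Fin m → E n) : Fin (2 * m) → E (2 * n) :=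
  fun k => euclideanDoubleIso n (doubleFrame x (finTwoMulEquivSum m k))

theorem muConst_two_mul_le {n m : ℕ} (x : Fin m → E n) (hunit : ∀ i, ‖x i‖ = 1)
    (htight : IsTightFrame x ((m : ℝ) / n)) : muConst (2 * m) (2 * n) ≤ muConst m n := by
  have hratio : ((2 * m : ℕ) : ℝ) / (2 * n : ℕ) = (m : ℝ) / n := by
    push_cast; exact mul_div_mul_left _ _ two_ne_zero
  refine le_muConst ⟨x, hunit, htight⟩ fun x' hunit' htight' => ?_
  refine (muConst_le_cohF (x := doubleFrameFin x') (fun k => ?_) ?_).trans ?_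
  · rw [doubleFrameFin, LinearIsometryEquiv.norm_map, norm_doubleFrame]; exact hunit' _
  · rw [hratio]; exact htight'.doubleFrame.comp_equiv_map _ (finTwoMulEquivSum m)
  · refine cohF_le (cohF_nonneg x') fun j k hjk => ?_
    rw [doubleFrameFin, doubleFrameFin, LinearIsometryEquiv.inner_map_map]
    exact abs_inner_doubleFrame_le (cohF_nonneg x') (fun _ _ => abs_inner_le_cohF x') _ _
      ((finTwoMulEquivSum m).injective.ne hjk)

theorem doubling_tight_frame_general {n m : ℕ}
    (x : Fin m → E n) (hunit : ∀ i, ‖x i‖ = 1)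
    (htight : ∀ v : E n, ∑ i, ⟪x i, v⟫ • x i = ((m : ℝ) / n) • v)
    (μ : ℝ) (hμ : cohF x = μ)
    (z : Fin m ⊕ Fin m → WithLp 2 (E n × E n))
    (hzp : ∀ i, z (Sum.inl i) = (Real.sqrt 2)⁻¹ • (WithLp.equiv 2 (E n × E n)).symm (x i, x i))
    (hzm : ∀ i, z (Sum.inr i) = (Real.sqrt 2)⁻¹ • (WithLp.equiv 2 (E n × E n)).symm (x i, -x i)) :
    (∀ j, ‖z j‖ = 1) ∧
    (∀ v : WithLp 2 (E n × E n), ∑ j, ⟪z j, v⟫ • z j = ((m : ℝ) / n) • v) ∧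
    (∀ j k, j ≠ k → |⟪z j, z k⟫| ≤ μ) ∧
    muConst (2 * m) (2 * n) ≤ muConst m n := by
  obtain rfl : z = doubleFrame x := funext fun j => j.rec hzp hzm
  subst hμ
  exact ⟨fun j => (norm_doubleFrame x j).trans (hunit _), IsTightFrame.doubleFrame htight,
    abs_inner_doubleFrame_le (cohF_nonneg x) fun _ _ => abs_inner_le_cohF x,
    muConst_two_mul_le x hunit htight⟩

theorem doubling_tight_frame {n m : ℕ} (hn : 0 < n) (hm : 0 < m)
    (x : Fin m → E n) (hunit : ∀ i, ‖x i‖ = 1)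
    (htight : ∀ v : E n, ∑ i, ⟪x i, v⟫ • x i = ((m : ℝ) / n) • v)
    (μ : ℝ) (hμ : cohF x = μ)
    (z : Fin m ⊕ Fin m → WithLp 2 (E n × E n))
    (hzp : ∀ i, z (Sum.inl i) = (Real.sqrt 2)⁻¹ • (WithLp.equiv 2 (E n × E n)).symm (x i, x i))
    (hzm : ∀ i, z (Sum.inr i) = (Real.sqrt 2)⁻¹ • (WithLp.equiv 2 (E n × E n)).symm (x i, -x i)) :
    (∀ j, ‖z j‖ = 1) ∧
    (∀ v : WithLp 2 (E n × E n), ∑ j, ⟪z j, v⟫ • z j = ((m : ℝ) / n) • v) ∧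
    (∀ j k, j ≠ k → |⟪z j, z k⟫| ≤ μ) ∧
    muConst (2 * m) (2 * n) ≤ muConst m n :=
  doubling_tight_frame_general x hunit htight μ hμ z hzp hzm
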